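/- Let k ≥ 4 be an integer, n := k−1, K(x,y) := (min(x,y)/max(x,y))^{n/2} on [0,1]² (with K(0,0) := 0), and T the integral operator (Tf)(x) := ∫₀¹ f(y) K(x,y) dy on L²[0,1]. If φ ∈ L²[0,1] is an eigenfunction of T for a nonzero eigenvalue, then φ has a representative that is continuous on [0,1] with φ(0) = 0; moreover, setting q(x) := −∫_x^1 t^{−n/2} φ(t) dt for x ∈ (0,1], the functions x ↦ x^{n/2} q'(x) and x ↦ x^{n/2−1} q(x) both extend continuously to [0,1] with value 0 at x = 0. -/

import Mathlib

/-!
Dominated convergence makes `g := λ⁻¹ T φ` continuous on `[0, ∞)`, and `g 0 = 0` because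
`K(0, ·) = 0`; since `T φ = λ φ`, `g` is a representative of `φ`. With
`q(x) = -∫_x^1 t^(-ν) g t` and `ν = n/2`, the fundamental theorem of calculus gives
`x^ν q'(x) = g x`. Finally `x^(ν-1) q(x) → 0`: splitting `[x, 1]` at a point `δ` below which
`|g| ≤ ε`, the piece over `[x, δ]` contributes at most `ε / (ν - 1)` because `ν > 1`, and the
piece over `[δ, 1]` is a constant multiplied by `x^(ν-1) → 0`.
-/

open MeasureTheory Set

/-- The GPY kernel `K(x,y) = (min(x,y)/max(x,y))^(n/2)` (with `K(0,0) = 0`,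
which holds automatically by Lean's conventions `0/0 = 0`, `0^(positive) = 0`). -/
noncomputable def gpyKernel (n : ℕ) (x y : ℝ) : ℝ := (min x y / max x y) ^ ((n : ℝ) / 2)

/-- Lebesgue measure restricted to `[0,1]`. -/
noncomputable def mu01 : Measure ℝ := volume.restrict (Set.Icc 0 1)

open Filter Topology

section RatioKernel

variable {ν x y : ℝ}

lemma min_div_max_zero_right : min x 0 / max x 0 = 0 := by
  rcases le_total x 0 with hx | hx
  · rw [max_eq_right hx, div_zero]
  · rw [min_eq_right hx, zero_div]

lemma min_div_max_rpow_mem_Icc (hν : 0 ≤ ν) (hx : 0 ≤ x) (hy : 0 ≤ y) :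
    (min x y / max x y) ^ ν ∈ Icc (0 : ℝ) 1 := by
  have hq : 0 ≤ min x y / max x y := div_nonneg (le_min hx hy) (hx.trans (le_max_left x y))
  exact ⟨Real.rpow_nonneg hq ν,
    Real.rpow_le_one hq (div_le_one_of_le₀ min_le_max (hx.trans (le_max_left x y))) hν⟩

lemma continuous_min_div_max_rpow (hν : 0 ≤ ν) (hy : 0 ≤ y) :
    Continuous fun x => (min x y / max x y) ^ ν := by
  rcases hy.eq_or_lt with rfl | hy
  · simp only [min_div_max_zero_right]
    exact continuous_const
  · exact ((continuous_id.min continuous_const).div (continuous_id.max continuous_const)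
      fun x => (hy.trans_le (le_max_right x y)).ne').rpow_const fun _ => Or.inr hν

theorem continuousOn_integral_mul_min_div_max_rpow {μ : Measure ℝ} {f : ℝ → ℝ}
    (hf : Integrable f μ) (hμ : ∀ᵐ y ∂μ, 0 ≤ y) (hν : 0 ≤ ν) :
    ContinuousOn (fun x => ∫ y, f y * (min x y / max x y) ^ ν ∂μ) (Ici 0) := by
  refine continuousOn_of_dominated (bound := fun y => ‖f y‖) (fun x _ => ?_) (fun x hx => ?_)
    hf.norm ?_
  · exact hf.aestronglyMeasurable.mul (by fun_prop : Measurable _).aestronglyMeasurable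
  · filter_upwards [hμ] with y hy
    have hK := min_div_max_rpow_mem_Icc hν hx hy
    rw [norm_mul, Real.norm_of_nonneg hK.1]
    exact mul_le_of_le_one_right (norm_nonneg _) hK.2
  · filter_upwards [hμ] with y hy
    exact (continuous_const.mul (continuous_min_div_max_rpow hν hy)).continuousOn

theorem integral_mul_min_zero_div_max_zero_rpow {μ : Measure ℝ} {f : ℝ → ℝ}
    (hν : ν ≠ 0) : ∫ y, f y * (min 0 y / max 0 y) ^ ν ∂μ = 0 := by
  simp [min_comm (0 : ℝ), max_comm (0 : ℝ), min_div_max_zero_right, Real.zero_rpow hν]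

end RatioKernel

section WeightedPrimitive

variable {ν : ℝ} {g : ℝ → ℝ}

lemma continuousOn_rpow_neg_mul {s : Set ℝ} (hs : s ⊆ Ioi 0) (hg : ContinuousOn g s) :
    ContinuousOn (fun t => t ^ (-ν) * g t) s :=
  (continuousOn_id.rpow_const fun _ ht => Or.inl (hs ht).ne').mul hg

lemma abs_integral_rpow_neg_mul_le (hν : 1 < ν) {x δ ε : ℝ} (hx : 0 < x) (hxδ : x ≤ δ)
    (hε : 0 ≤ ε) (hg : ∀ t ∈ Ioc x δ, |g t| ≤ ε) :
    |∫ t in x..δ, t ^ (-ν) * g t| ≤ ε * x ^ (1 - ν) / (ν - 1) := by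
  have h0 : (0 : ℝ) ∉ uIcc x δ := by rw [uIcc_of_le hxδ]; exact fun h => hx.not_ge h.1
  calc |∫ t in x..δ, t ^ (-ν) * g t| ≤ ∫ t in x..δ, ε * t ^ (-ν) := by
        refine intervalIntegral.norm_integral_le_of_norm_le (f := fun t => t ^ (-ν) * g t) hxδ
          (ae_of_all _ fun t ht => ?_)
          ((intervalIntegral.intervalIntegrable_rpow (μ := volume) (Or.inr h0)).const_mul ε)
        rw [norm_mul, Real.norm_of_nonneg (Real.rpow_nonneg (hx.trans ht.1).le _), mul_comm]
        exact mul_le_mul_of_nonneg_right (hg t ht) (Real.rpow_nonneg (hx.trans ht.1).le _)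
    _ = ε * (x ^ (1 - ν) - δ ^ (1 - ν)) / (ν - 1) := by
        rw [intervalIntegral.integral_const_mul, integral_rpow (Or.inr ⟨by linarith, h0⟩),
          neg_add_eq_sub]
        have : (1 : ℝ) - ν ≠ 0 := by linarith
        have : ν - 1 ≠ 0 := by linarith
        field_simp
        ring
    _ ≤ ε * x ^ (1 - ν) / (ν - 1) := by
        gcongr
        exact sub_le_self _ (Real.rpow_nonneg (hx.le.trans hxδ) _)

lemma hasDerivAt_integral_rpow_neg_mul (hg : ContinuousOn g (Ioi 0)) {x b : ℝ} (hx : 0 < x)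
    (hb : 0 < b) :
    HasDerivAt (fun z => ∫ t in z..b, t ^ (-ν) * g t) (-(x ^ (-ν) * g x)) x := by
  have hF := continuousOn_rpow_neg_mul (ν := ν) subset_rfl hg
  refine intervalIntegral.integral_hasDerivAt_left ?_
    (hF.stronglyMeasurableAtFilter isOpen_Ioi x hx) (hF.continuousAt (Ioi_mem_nhds hx))
  exact (hF.mono fun t ht => (lt_min hx hb).trans_le ht.1).intervalIntegrable

lemma rpow_mul_deriv_neg_integral_rpow_neg_mul (hg : ContinuousOn g (Ioi 0)) {x : ℝ}
    (hx : 0 < x) : x ^ ν * deriv (fun z => -∫ t in z..1, t ^ (-ν) * g t) x = g x := by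
  have hq : HasDerivAt (fun z => -∫ t in z..1, t ^ (-ν) * g t) (x ^ (-ν) * g x) x := by
    simpa only [neg_neg] using (hasDerivAt_integral_rpow_neg_mul hg hx one_pos).fun_neg
  rw [hq.deriv, ← mul_assoc, ← Real.rpow_add hx, add_neg_cancel, Real.rpow_zero, one_mul]

theorem tendsto_rpow_mul_integral_rpow_neg_mul (hν : 1 < ν) (hg : ContinuousOn g (Ioc 0 1))
    (hg0 : Tendsto g (𝓝[>] 0) (𝓝 0)) :
    Tendsto (fun x => x ^ (ν - 1) * ∫ t in x..1, t ^ (-ν) * g t) (𝓝[>] 0) (𝓝 0) := by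
  have hν1 : 0 < ν - 1 := sub_pos.2 hν
  have hint : ∀ a b : ℝ, 0 < a → a ≤ b → b ≤ 1 →
      IntervalIntegrable (fun t => t ^ (-ν) * g t) volume a b := fun a b ha hab hb =>
    (continuousOn_rpow_neg_mul (fun t ht => ha.trans_le ht.1)
      (hg.mono (Icc_subset_Ioc ha hb))).intervalIntegrable_of_Icc hab
  rw [Metric.tendsto_nhds]
  intro ε hε
  obtain ⟨δ, hδ, hgδ⟩ := mem_nhdsGT_iff_exists_Ioc_subset.1
    (hg0 (Metric.closedBall_mem_nhds 0 (by positivity : 0 < ε * (ν - 1) / 2)))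
  set C := ∫ t in min δ 1..1, t ^ (-ν) * g t with hC_def
  have hC : Tendsto (fun x : ℝ => x ^ (ν - 1) * C) (𝓝[>] 0) (𝓝 0) := by
    simpa [Real.zero_rpow hν1.ne'] using
      ((Real.continuousAt_rpow_const 0 (ν - 1) (Or.inr hν1.le)).tendsto.mul_const C).mono_left
        nhdsWithin_le_nhds
  filter_upwards [Metric.tendsto_nhds.1 hC (ε / 2) (half_pos hε),
    Ioo_mem_nhdsGT (lt_min hδ one_pos)] with x hxC hx
  rw [Real.dist_eq, sub_zero] at hxC ⊢
  have hxδ : x ≤ min δ 1 := hx.2.le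
  rw [← intervalIntegral.integral_add_adjacent_intervals (hint _ _ hx.1 hxδ (min_le_right _ _))
    (hint _ _ (hx.1.trans_le hxδ) (min_le_right _ _) le_rfl), mul_add, ← hC_def]
  have hsmall := abs_integral_rpow_neg_mul_le (g := g) (ε := ε * (ν - 1) / 2) hν hx.1 hxδ
    (by positivity) fun t ht => by
      simpa using hgδ ⟨hx.1.trans ht.1, ht.2.trans (min_le_left _ _)⟩
  have hpow : x ^ (ν - 1) * x ^ (1 - ν) = 1 := by
    rw [← Real.rpow_add hx.1, sub_add_sub_cancel', sub_self, Real.rpow_zero]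
  have hnear : |x ^ (ν - 1) * ∫ t in x..min δ 1, t ^ (-ν) * g t| ≤ ε / 2 := by
    rw [abs_mul, abs_of_nonneg (Real.rpow_nonneg hx.1.le _)]
    calc x ^ (ν - 1) * |∫ t in x..min δ 1, t ^ (-ν) * g t|
        ≤ x ^ (ν - 1) * (ε * (ν - 1) / 2 * x ^ (1 - ν) / (ν - 1)) :=
          mul_le_mul_of_nonneg_left hsmall (Real.rpow_nonneg hx.1.le _)
      _ = ε / 2 * (x ^ (ν - 1) * x ^ (1 - ν)) := by field_simp
      _ = ε / 2 := by rw [hpow, mul_one]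
  linarith [abs_add_le (x ^ (ν - 1) * ∫ t in x..min δ 1, t ^ (-ν) * g t) (x ^ (ν - 1) * C)]

theorem continuousOn_rpow_mul_integral_rpow_neg_mul (hν : 1 < ν) (hg : ContinuousOn g (Ici 0))
    (hg0 : g 0 = 0) :
    ContinuousOn (fun x => x ^ (ν - 1) * ∫ t in x..1, t ^ (-ν) * g t) (Icc 0 1) := by
  intro x hx
  rcases hx.1.eq_or_lt with rfl | hx0
  · have hlim := tendsto_rpow_mul_integral_rpow_neg_mul hν (hg.mono fun t ht => ht.1.le)
      (by simpa only [ContinuousWithinAt, hg0] using (hg 0 self_mem_Ici).mono Ioi_subset_Ici_self)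
    refine (continuousWithinAt_Ioi_iff_Ici.1 ?_).mono Icc_subset_Ici_self
    simpa [ContinuousWithinAt, Real.zero_rpow (sub_pos.2 hν).ne'] using hlim
  · exact ((continuousAt_id.rpow_const (Or.inl hx0.ne')).mul
      (hasDerivAt_integral_rpow_neg_mul (hg.mono Ioi_subset_Ici_self) hx0
        one_pos).continuousAt).continuousWithinAt

end WeightedPrimitive

lemma MeasureTheory.Lp.ae_eq_inv_mul_of_coeFn_smul_ae_eq {α : Type*} [MeasurableSpace α]
    {μ : Measure α} {p : ENNReal} {φ : Lp ℝ p μ} {c : ℝ} {F : α → ℝ} (hc : c ≠ 0)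
    (hF : ((c • φ : Lp ℝ p μ) : α → ℝ) =ᵐ[μ] F) : φ =ᵐ[μ] fun x => c⁻¹ * F x := by
  filter_upwards [hF, Lp.coeFn_smul c φ] with x hFx hφx
  rw [← hFx, hφx, Pi.smul_apply, smul_eq_mul, inv_mul_cancel_left₀ hc]

instance : IsFiniteMeasure mu01 := Real.isFiniteMeasure_restrict_Icc 0 1

lemma ae_mu01_nonneg : ∀ᵐ y ∂mu01, 0 ≤ y :=
  (ae_restrict_mem measurableSet_Icc).mono fun _ hy => hy.1

theorem gpy_eigenfunction_continuous_representative (k : ℕ) (hk : 4 ≤ k)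
    (T : Lp ℝ 2 mu01 →L[ℝ] Lp ℝ 2 mu01)
    (hT : ∀ f : Lp ℝ 2 mu01,
      (T f : ℝ → ℝ) =ᵐ[mu01] fun x => ∫ y in Set.Icc (0:ℝ) 1, f y * gpyKernel (k - 1) x y)
    (φ : Lp ℝ 2 mu01) (lam : ℝ) (hlam : lam ≠ 0) (heig : T φ = lam • φ) :
    ∃ g : ℝ → ℝ, (φ : ℝ → ℝ) =ᵐ[mu01] g ∧ ContinuousOn g (Set.Icc 0 1) ∧ g 0 = 0 ∧
      (∃ h : ℝ → ℝ, ContinuousOn h (Set.Icc 0 1) ∧ h 0 = 0 ∧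
        ∀ x ∈ Set.Ioc (0:ℝ) 1,
          h x = x ^ (((k : ℝ) - 1) / 2) *
            deriv (fun z => -∫ t in z..1, t ^ (-((k : ℝ) - 1) / 2) * g t) x) ∧
      (∃ h : ℝ → ℝ, ContinuousOn h (Set.Icc 0 1) ∧ h 0 = 0 ∧
        ∀ x ∈ Set.Ioc (0:ℝ) 1,
          h x = x ^ (((k : ℝ) - 1) / 2 - 1) *
            (-∫ t in x..1, t ^ (-((k : ℝ) - 1) / 2) * g t)) := by
  have hexp : ((k - 1 : ℕ) : ℝ) / 2 = ((k : ℝ) - 1) / 2 := by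
    rw [Nat.cast_sub (by omega), Nat.cast_one]
  have hν : 1 < ((k : ℝ) - 1) / 2 := by
    have : (4 : ℝ) ≤ k := by exact_mod_cast hk
    linarith
  simp only [neg_div]
  set ν := ((k : ℝ) - 1) / 2
  set g : ℝ → ℝ := fun x => lam⁻¹ * ∫ y, φ y * (min x y / max x y) ^ ν ∂mu01
  have hg : ContinuousOn g (Ici 0) := continuousOn_const.mul <|
    continuousOn_integral_mul_min_div_max_rpow ((Lp.memLp φ).integrable (by norm_num))
      ae_mu01_nonneg (by linarith)
  have hg0 : g 0 = 0 := by
    simp only [g, integral_mul_min_zero_div_max_zero_rpow (by linarith : ν ≠ 0), mul_zero]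
  have hφg : φ =ᵐ[mu01] g := by
    have hTφ := hT φ
    rw [heig] at hTφ
    simp only [gpyKernel, hexp] at hTφ
    exact Lp.ae_eq_inv_mul_of_coeFn_smul_ae_eq hlam hTφ
  refine ⟨g, hφg, hg.mono Icc_subset_Ici_self, hg0,
    ⟨g, hg.mono Icc_subset_Ici_self, hg0, fun x hx =>
      (rpow_mul_deriv_neg_integral_rpow_neg_mul (hg.mono Ioi_subset_Ici_self) hx.1).symm⟩,
    ⟨_, ?_, ?_, fun x _ => rfl⟩⟩
  · simpa only [mul_neg] using (continuousOn_rpow_mul_integral_rpow_neg_mul hν hg hg0).fun_neg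
  · rw [Real.zero_rpow (by linarith), zero_mul]
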